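/- Let k > 0, K = [[0, 1], [−k², −2k]], Z = [[0,0,0],[0,2k,1]], κ = (0, k²)ᵀ, H_ε = [[0,1],[−1,−2]], and let P_ε = [[3/2, 1/2], [1/2, 1/2]] (the positive definite solution of H_εᵀP_ε + P_εH_ε = −I). Let ϵ : ℝ → ℝ², ζ̃_p : ℝ → ℝ³ continuous, n : ℝ → ℝ continuous, T ∈ ℝ, D ≥ 0, r_n ≥ 0 with ‖ζ̃_p(t)‖ ≤ D and |n(t)| ≤ r_n for all t ≥ T, and suppose ϵ'(t) = K·ϵ(t) + Z·ζ̃_p(t) + κ·n(t) for all t. Then for every ν ∈ (0,1): limsup_{t→∞} ‖ϵ(t)‖ ≤ max{k^{−1}, 1} · √(λ_max(P_ε)/λ_min(P_ε)) · (2·λ_max(P_ε))/(ν·k) · (‖Z‖·D + k²·r_n), where ‖Z‖ denotes the operator norm of Z. -/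

import Mathlib

/-!
`K = -k·I + N` with `N = [[k, 1], [-k², -k]]` and `N² = 0`, so `exp (τK) = e^{-kτ} (I + τN)`.
The disturbance `w = Zζ̃_p + κn` has vanishing first coordinate, and on that axis `N` acts with
norm `√(1 + k²)`. Variation of constants (in differential form, closed by the fencing theorem)
then bounds `‖ϵ(t) - exp((t - T)K) ϵ(T)‖` by `M ∫₀^∞ e^{-kτ} (1 + √(1 + k²) τ) dτ
= M (1/k + √(1 + k²)/k²)` where `M = ‖Z‖D + k²r_n` bounds `‖w‖`, while the transient term
decays. Finally `M (1/k + √(1 + k²)/k²) ≤ 3 max{k⁻¹, 1} M / k`, which is below the claimed bound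
because `λ_max(P_ε)/λ_min(P_ε) ≥ 1` and `λ_max(P_ε) ≥ 3/2`.
-/

open Matrix Filter

noncomputable section

def Kmat (k : ℝ) : Matrix (Fin 2) (Fin 2) ℝ := !![0, 1; -k ^ 2, -2 * k]

def Zmat (k : ℝ) : Matrix (Fin 2) (Fin 3) ℝ := !![0, 0, 0; 0, 2 * k, 1]

def kappa (k : ℝ) : EuclideanSpace ℝ (Fin 2) :=
  (EuclideanSpace.equiv (Fin 2) ℝ).symm ![0, k ^ 2]

/-- `P_ε = [[3/2,1/2],[1/2,1/2]]`, the positive definite solution of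
`H_εᵀ P_ε + P_ε H_ε = −I`. -/
def Peps : Matrix (Fin 2) (Fin 2) ℝ := !![3/2, 1/2; 1/2, 1/2]

open NormedSpace

theorem exp_eq_one_add_of_mul_self_eq_zero {𝔸 : Type*} [NormedRing 𝔸] [NormedAlgebra ℝ 𝔸]
    {x : 𝔸} (hx : x * x = 0) : exp x = 1 + x := by
  rw [congrFun (exp_eq_tsum ℝ) x, tsum_eq_sum (s := Finset.range 2)]
  · simp [Finset.sum_range_succ]
  · intro n hn
    obtain ⟨m, rfl⟩ : ∃ m, n = m + 2 := ⟨n - 2, by simp at hn; omega⟩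
    simp [pow_add, sq, hx]

theorem exp_smul_algebraMap_add_of_mul_self_eq_zero {𝔸 : Type*} [NormedRing 𝔸]
    [NormedAlgebra ℝ 𝔸] [CompleteSpace 𝔸] (c τ : ℝ) {N : 𝔸} (hN : N * N = 0) :
    exp (τ • (algebraMap ℝ 𝔸 c + N)) = Real.exp (τ * c) • (1 + τ • N) := by
  let +nondep : NormedAlgebra ℚ 𝔸 := .restrictScalars ℚ ℝ 𝔸
  have hτN : (τ • N) * (τ • N) = 0 := by rw [smul_mul_smul, hN, smul_zero]
  rw [smul_add, Algebra.smul_def τ (algebraMap ℝ 𝔸 c), ← map_mul,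
    NormedSpace.exp_add_of_commute (Algebra.commutes _ _), exp_eq_one_add_of_mul_self_eq_zero hτN,
    ← algebraMap_exp_comm, ← Real.exp_eq_exp_ℝ, ← Algebra.smul_def]

section VariationOfConstants

variable {E : Type*} [NormedAddCommGroup E] [NormedSpace ℝ E] [CompleteSpace E]
  (A : E →L[ℝ] E) {u g : ℝ → E}

theorem hasDerivAt_exp_smul_apply_of_hasDerivAt (hu : ∀ t, HasDerivAt u (A (u t) + g t) t)
    (t s : ℝ) :
    HasDerivAt (fun s => exp ((t - s) • A) (u s)) (exp ((t - s) • A) (g s)) s := by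
  have hexp : HasDerivAt (fun s : ℝ => exp ((t - s) • A)) (-(exp ((t - s) • A) * A)) s := by
    simpa [Function.comp_def] using
      (hasDerivAt_exp_smul_const A (t - s)).scomp s ((hasDerivAt_id s).const_sub t)
  convert hexp.clm_apply (hu s) using 1
  simp [map_add]

theorem norm_sub_exp_smul_apply_le (hu : ∀ t, HasDerivAt u (A (u t) + g t) t)
    {β β' : ℝ → ℝ} (hβ : ∀ s, HasDerivAt β (β' s) s) {T t : ℝ} (hTt : T ≤ t)
    (bound : ∀ s ∈ Set.Ico T t, ‖exp ((t - s) • A) (g s)‖ ≤ β' s) :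
    ‖u t - exp ((t - T) • A) (u T)‖ ≤ β t - β T := by
  have hf (s : ℝ) : HasDerivAt (fun s => exp ((t - s) • A) (u s) - exp ((t - T) • A) (u T))
      (exp ((t - s) • A) (g s)) s :=
    (hasDerivAt_exp_smul_apply_of_hasDerivAt A hu t s).sub_const _
  simpa using image_norm_le_of_norm_deriv_right_le_deriv_boundary
    (fun s _ => (hf s).continuousAt.continuousWithinAt) (fun s _ => (hf s).hasDerivWithinAt)
    (B := fun s => β s - β T) (by simp) (fun s => (hβ s).sub_const _) bound
    (Set.right_mem_Icc.mpr hTt)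

end VariationOfConstants

theorem hasDerivAt_exp_neg_mul_mul_add {k : ℝ} (hk : k ≠ 0) (c τ : ℝ) :
    HasDerivAt (fun τ => Real.exp (-(k * τ)) * ((1 + c * τ) / k + c / k ^ 2))
      (-(Real.exp (-(k * τ)) * (1 + c * τ))) τ := by
  have h := (((hasDerivAt_id' τ).const_mul k).neg.exp).mul
    ((((hasDerivAt_id' τ).const_mul c).const_add 1).div_const k |>.add_const (c / k ^ 2))
  refine h.congr_deriv ?_
  simp only [Pi.neg_apply]
  field_simp
  ring

theorem tendsto_exp_neg_mul_mul_add {k : ℝ} (hk : 0 < k) (a b : ℝ) :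
    Tendsto (fun τ => Real.exp (-(k * τ)) * (a + τ * b)) atTop (nhds 0) := by
  have hkτ : Tendsto (fun τ : ℝ => k * τ) atTop atTop := tendsto_id.const_mul_atTop hk
  have h := ((Real.tendsto_exp_neg_atTop_nhds_zero.comp hkτ).const_mul a).add
    (((Real.tendsto_pow_mul_exp_neg_atTop_nhds_zero 1).comp hkτ).const_mul (b / k))
  rw [mul_zero, mul_zero, add_zero] at h
  refine h.congr fun τ => ?_
  simp only [Function.comp_apply, pow_one]
  field_simp

local notation "ℝ²" => EuclideanSpace ℝ (Fin 2)

def Nmat (k : ℝ) : Matrix (Fin 2) (Fin 2) ℝ := !![k, 1; -k ^ 2, -k]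

def Kop (k : ℝ) : ℝ² →L[ℝ] ℝ² := toEuclideanCLM (𝕜 := ℝ) (Kmat k)

def Nop (k : ℝ) : ℝ² →L[ℝ] ℝ² := toEuclideanCLM (𝕜 := ℝ) (Nmat k)

theorem Nmat_mul_self (k : ℝ) : Nmat k * Nmat k = 0 := by
  ext i j
  fin_cases i <;> fin_cases j <;> simp [Nmat, mul_apply, Fin.sum_univ_two] <;> ring

theorem Kmat_eq_algebraMap_add_Nmat (k : ℝ) : Kmat k = algebraMap ℝ _ (-k) + Nmat k := by
  ext i j
  fin_cases i <;> fin_cases j <;> simp [Kmat, Nmat, algebraMap_eq_diagonal]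
  ring

theorem exp_smul_Kop (k τ : ℝ) : exp (τ • Kop k) = Real.exp (-(k * τ)) • (1 + τ • Nop k) := by
  have hK : Kop k = algebraMap ℝ _ (-k) + Nop k := by
    rw [Kop, Nop, Kmat_eq_algebraMap_add_Nmat, map_add, AlgHomClass.commutes]
  have hN : Nop k * Nop k = 0 := by rw [Nop, ← map_mul, Nmat_mul_self, map_zero]
  rw [hK, exp_smul_algebraMap_add_of_mul_self_eq_zero _ _ hN, mul_neg, mul_comm]

theorem norm_Nop_apply_of_apply_zero_eq_zero (k : ℝ) {v : ℝ²} (hv : v 0 = 0) :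
    ‖Nop k v‖ = √(1 + k ^ 2) * ‖v‖ := by
  rw [← Real.sqrt_sq (norm_nonneg _), ← Real.sqrt_sq (norm_nonneg v),
    ← Real.sqrt_mul (by positivity), EuclideanSpace.norm_sq_eq, EuclideanSpace.norm_sq_eq]
  congr 1
  simp only [Nop, ofLp_toEuclideanCLM, Fin.sum_univ_two, Nmat, mulVec, dotProduct, hv]
  simp only [Real.norm_eq_abs, sq_abs, of_apply, cons_val', cons_val_zero, cons_val_one,
    empty_val', cons_val_fin_one, mul_zero, zero_add]
  ring

theorem norm_exp_smul_Kop_apply_le (k : ℝ) {τ : ℝ} (hτ : 0 ≤ τ) (v : ℝ²) :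
    ‖exp (τ • Kop k) v‖ ≤ Real.exp (-(k * τ)) * (‖v‖ + τ * ‖Nop k v‖) := by
  rw [exp_smul_Kop, _root_.smul_apply, norm_smul, Real.norm_of_nonneg (Real.exp_nonneg _)]
  gcongr
  refine (norm_add_le _ _).trans_eq ?_
  simp [norm_smul, abs_of_nonneg hτ]
theorem norm_sub_exp_smul_Kop_apply_le {k : ℝ} (hk : 0 < k) {ϵ g : ℝ → ℝ²}
    (hϵ : ∀ t, HasDerivAt ϵ (Kop k (ϵ t) + g t) t) {T M : ℝ} (hgM : ∀ s, T ≤ s → ‖g s‖ ≤ M)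
    (hg0 : ∀ s, g s 0 = 0) {t : ℝ} (hTt : T ≤ t) :
    ‖ϵ t - exp ((t - T) • Kop k) (ϵ T)‖ ≤ M * (1 / k + √(1 + k ^ 2) / k ^ 2) := by
  set c := √(1 + k ^ 2)
  have hM : 0 ≤ M := (norm_nonneg _).trans (hgM T le_rfl)
  set G : ℝ → ℝ := fun τ => Real.exp (-(k * τ)) * ((1 + c * τ) / k + c / k ^ 2)
  have hβ (s : ℝ) : HasDerivAt (fun s => M * G (t - s))
      (M * (Real.exp (-(k * (t - s))) * (1 + c * (t - s)))) s := by
    have := ((hasDerivAt_exp_neg_mul_mul_add hk.ne' c (t - s)).comp s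
      ((hasDerivAt_id' s).const_sub t)).const_mul M
    exact this.congr_deriv (by ring)
  have bound (s : ℝ) (hs : s ∈ Set.Ico T t) :
      ‖exp ((t - s) • Kop k) (g s)‖ ≤ M * (Real.exp (-(k * (t - s))) * (1 + c * (t - s))) := by
    have hts : 0 ≤ t - s := by linarith [hs.2]
    calc ‖exp ((t - s) • Kop k) (g s)‖
        ≤ Real.exp (-(k * (t - s))) * (‖g s‖ + (t - s) * ‖Nop k (g s)‖) :=
          norm_exp_smul_Kop_apply_le k hts (g s)
      _ = Real.exp (-(k * (t - s))) * (1 + c * (t - s)) * ‖g s‖ := by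
          rw [norm_Nop_apply_of_apply_zero_eq_zero k (hg0 s)]; ring
      _ ≤ Real.exp (-(k * (t - s))) * (1 + c * (t - s)) * M := by
          gcongr
          exact hgM s hs.1
      _ = _ := by ring
  have hGT : 0 ≤ G (t - T) := by
    have : 0 ≤ t - T := by linarith
    positivity
  calc ‖ϵ t - exp ((t - T) • Kop k) (ϵ T)‖ ≤ M * G (t - t) - M * G (t - T) :=
        norm_sub_exp_smul_apply_le (Kop k) hϵ hβ hTt bound
    _ ≤ M * G 0 := by rw [sub_self]; exact sub_le_self _ (mul_nonneg hM hGT)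
    _ = M * (1 / k + c / k ^ 2) := by simp [G]

theorem limsup_norm_le_of_hasDerivAt_Kop {k : ℝ} (hk : 0 < k) {ϵ g : ℝ → ℝ²}
    (hϵ : ∀ t, HasDerivAt ϵ (Kop k (ϵ t) + g t) t) {T M : ℝ} (hgM : ∀ s, T ≤ s → ‖g s‖ ≤ M)
    (hg0 : ∀ s, g s 0 = 0) :
    limsup (fun t => ‖ϵ t‖) atTop ≤ M * (1 / k + √(1 + k ^ 2) / k ^ 2) := by
  set B := M * (1 / k + √(1 + k ^ 2) / k ^ 2)
  set transient := fun t => Real.exp (-(k * (t - T))) * (‖ϵ T‖ + (t - T) * ‖Nop k (ϵ T)‖)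
  have hle : ∀ᶠ t in atTop, ‖ϵ t‖ ≤ transient t + B := by
    filter_upwards [eventually_ge_atTop T] with t hTt
    calc ‖ϵ t‖ ≤ ‖exp ((t - T) • Kop k) (ϵ T)‖ + ‖ϵ t - exp ((t - T) • Kop k) (ϵ T)‖ :=
          norm_le_insert' _ _
      _ ≤ transient t + B := add_le_add (norm_exp_smul_Kop_apply_le k (by linarith) _)
          (norm_sub_exp_smul_Kop_apply_le hk hϵ hgM hg0 hTt)
  have hlim : Tendsto (fun t => transient t + B) atTop (nhds B) := by
    simpa [transient, sub_eq_add_neg] using ((tendsto_exp_neg_mul_mul_add hk _ _).comp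
      (tendsto_atTop_add_const_right atTop (-T) tendsto_id)).add_const B
  calc limsup (fun t => ‖ϵ t‖) atTop ≤ limsup (fun t => transient t + B) atTop :=
        limsup_le_limsup hle (isCoboundedUnder_le_of_le atTop fun t => norm_nonneg _)
          hlim.isBoundedUnder_le
    _ = B := hlim.limsup_eq

theorem Peps_eigenvalues_sum_prod (hP : Peps.IsHermitian) :
    hP.eigenvalues 0 + hP.eigenvalues 1 = 2 ∧ hP.eigenvalues 0 * hP.eigenvalues 1 = 1 / 2 := by
  have htr := hP.trace_eq_sum_eigenvalues
  have hdet := hP.det_eq_prod_eigenvalues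
  have htr' : Peps.trace = 2 := by norm_num [Peps, trace_fin_two_of]
  have hdet' : Peps.det = 1 / 2 := by norm_num [Peps, det_fin_two_of]
  simp only [Fin.sum_univ_two, Fin.prod_univ_two, RCLike.ofReal_real_eq_id, id, htr', hdet']
    at htr hdet
  exact ⟨htr.symm, hdet.symm⟩

theorem Peps_eigenvalues_bounds (hP : Peps.IsHermitian) :
    0 < ⨅ i, hP.eigenvalues i ∧ (⨅ i, hP.eigenvalues i) ≤ ⨆ i, hP.eigenvalues i ∧
      3 / 2 ≤ ⨆ i, hP.eigenvalues i := by
  obtain ⟨hsum, hprod⟩ := Peps_eigenvalues_sum_prod hP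
  have hbdd := (Set.finite_range hP.eigenvalues).bddAbove
  have hbdd' := (Set.finite_range hP.eigenvalues).bddBelow
  obtain ⟨j, hj⟩ := exists_eq_ciInf_of_finite (f := hP.eigenvalues)
  have hpos (i : Fin 2) : 0 < hP.eigenvalues i := by
    fin_cases i <;> simp <;> nlinarith [sq_nonneg (hP.eigenvalues 0 - hP.eigenvalues 1)]
  refine ⟨hj ▸ hpos j, ciInf_le_ciSup hbdd' hbdd, ?_⟩
  -- `(3/2 - λ₀)(3/2 - λ₁) = -1/4 < 0`, so one eigenvalue exceeds `3/2`
  by_contra! h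
  have h0 := (le_ciSup hbdd 0).trans_lt h
  have h1 := (le_ciSup hbdd 1).trans_lt h
  nlinarith

theorem one_div_add_sqrt_div_sq_le {k : ℝ} (hk : 0 < k) :
    1 / k + √(1 + k ^ 2) / k ^ 2 ≤ max k⁻¹ 1 * (3 / k) := by
  have hsqrt : √(1 + k ^ 2) ≤ 1 + k :=
    Real.sqrt_le_iff.mpr ⟨by linarith, by nlinarith⟩
  have hmax : 1 + 2 * k ≤ 3 * (max k⁻¹ 1 * k) := by
    have h1 : 1 ≤ max k⁻¹ 1 * k := by
      rw [← inv_mul_cancel₀ hk.ne']; gcongr; exact le_max_left _ _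
    have h2 : k ≤ max k⁻¹ 1 * k := le_mul_of_one_le_left hk.le (le_max_right _ _)
    linarith
  calc 1 / k + √(1 + k ^ 2) / k ^ 2 ≤ (1 + 2 * k) / k ^ 2 := by
        rw [show 1 / k + √(1 + k ^ 2) / k ^ 2 = (k + √(1 + k ^ 2)) / k ^ 2 by field_simp]
        exact div_le_div_of_nonneg_right (by linarith) (by positivity)
    _ ≤ 3 * (max k⁻¹ 1 * k) / k ^ 2 := by gcongr
    _ = max k⁻¹ 1 * (3 / k) := by field_simp

theorem three_div_le_Peps_eigenvalue_factor (hP : Peps.IsHermitian) {k ν : ℝ} (hk : 0 < k)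
    (hν : ν ∈ Set.Ioo (0 : ℝ) 1) :
    3 / k ≤ √((⨆ i, hP.eigenvalues i) / (⨅ i, hP.eigenvalues i)) *
      (2 * (⨆ i, hP.eigenvalues i) / (ν * k)) := by
  obtain ⟨hI, hIS, hS⟩ := Peps_eigenvalues_bounds hP
  have hsqrt : 1 ≤ √((⨆ i, hP.eigenvalues i) / (⨅ i, hP.eigenvalues i)) :=
    Real.one_le_sqrt.mpr ((one_le_div hI).mpr hIS)
  obtain ⟨hν0, hν1⟩ := hν
  calc 3 / k ≤ 2 * (⨆ i, hP.eigenvalues i) / (ν * k) := by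
        rw [div_le_div_iff₀ hk (by positivity)]
        nlinarith
    _ ≤ _ := le_mul_of_one_le_left (by positivity) hsqrt

theorem toEuclideanLin_Zmat_apply_zero (k : ℝ) (ζ : EuclideanSpace ℝ (Fin 3)) :
    toEuclideanLin (Zmat k) ζ 0 = 0 := by
  simp [Zmat, mulVec, dotProduct, Fin.sum_univ_succ]

theorem kappa_apply_zero (k : ℝ) : kappa k 0 = 0 := by
  simp [kappa]

theorem norm_kappa (k : ℝ) : ‖kappa k‖ = k ^ 2 := by
  rw [EuclideanSpace.norm_eq, ← Real.sqrt_sq (sq_nonneg k)]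
  simp [kappa, Fin.sum_univ_two]

theorem control_error_ultimate_bound_general
    (k : ℝ) (hk : 0 < k) (hP : Peps.IsHermitian)
    (ϵ : ℝ → EuclideanSpace ℝ (Fin 2)) (ζp : ℝ → EuclideanSpace ℝ (Fin 3))
    (n : ℝ → ℝ)
    (T D rn : ℝ)
    (hζb : ∀ t : ℝ, T ≤ t → ‖ζp t‖ ≤ D)
    (hnb : ∀ t : ℝ, T ≤ t → |n t| ≤ rn)
    (hdyn : ∀ t : ℝ, HasDerivAt ϵ
      (Matrix.toEuclideanLin (Kmat k) (ϵ t) + Matrix.toEuclideanLin (Zmat k) (ζp t)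
        + n t • kappa k) t)
    (ν : ℝ) (hν : ν ∈ Set.Ioo (0 : ℝ) 1) :
    limsup (fun t : ℝ => ‖ϵ t‖) atTop ≤
      max k⁻¹ 1 *
        Real.sqrt ((⨆ i, hP.eigenvalues i) / (⨅ i, hP.eigenvalues i)) *
        (2 * (⨆ i, hP.eigenvalues i) / (ν * k)) *
        (‖LinearMap.toContinuousLinearMap (Matrix.toEuclideanLin (Zmat k))‖ * D
          + k ^ 2 * rn) := by
  set Z := LinearMap.toContinuousLinearMap (toEuclideanLin (Zmat k))
  set M := ‖Z‖ * D + k ^ 2 * rn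
  set w : ℝ → ℝ² := fun t => Z (ζp t) + n t • kappa k
  have hϵ (t : ℝ) : HasDerivAt ϵ (Kop k (ϵ t) + w t) t :=
    (hdyn t).congr_deriv (add_assoc _ _ _)
  have hwM (s : ℝ) (hs : T ≤ s) : ‖w s‖ ≤ M := by
    calc ‖w s‖ ≤ ‖Z‖ * ‖ζp s‖ + k ^ 2 * |n s| := by
          refine (norm_add_le _ _).trans ?_
          rw [norm_smul, Real.norm_eq_abs, norm_kappa, mul_comm |n s|]
          gcongr
          exact Z.le_opNorm _
      _ ≤ ‖Z‖ * D + k ^ 2 * rn := by gcongr; exacts [hζb s hs, hnb s hs]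
  have hw0 (s : ℝ) : w s 0 = 0 := by
    simp [w, Z, toEuclideanLin_Zmat_apply_zero, kappa_apply_zero]
  have hM : 0 ≤ M := (norm_nonneg _).trans (hwM T le_rfl)
  calc limsup (fun t => ‖ϵ t‖) atTop ≤ M * (1 / k + √(1 + k ^ 2) / k ^ 2) :=
        limsup_norm_le_of_hasDerivAt_Kop hk hϵ hwM hw0
    _ ≤ M * (max k⁻¹ 1 * (3 / k)) := mul_le_mul_of_nonneg_left (one_div_add_sqrt_div_sq_le hk) hM
    _ ≤ M * (max k⁻¹ 1 * (√((⨆ i, hP.eigenvalues i) / (⨅ i, hP.eigenvalues i)) *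
          (2 * (⨆ i, hP.eigenvalues i) / (ν * k)))) := by
        gcongr; exact three_div_le_Peps_eigenvalue_factor hP hk hν
    _ = _ := by ring

/-- quantitative ultimate bound for the closed-loop control error
`ϵ = (e, e')ᵀ` obeying `ϵ' = Kϵ + Zζ̃_p + κn`, with `‖ζ̃_p(t)‖ ≤ D` and `|n(t)| ≤ r_n`
for `t ≥ T`:  for every `ν ∈ (0,1)`,
`limsup ‖ϵ‖ ≤ max{k⁻¹,1} √(λmax(P_ε)/λmin(P_ε)) (2λmax(P_ε)/(νk)) (‖Z‖D + k²r_n)`. -/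
theorem control_error_ultimate_bound
    (k : ℝ) (hk : 0 < k) (hP : Peps.IsHermitian)
    (ϵ : ℝ → EuclideanSpace ℝ (Fin 2)) (ζp : ℝ → EuclideanSpace ℝ (Fin 3))
    (n : ℝ → ℝ) (hζc : Continuous ζp) (hnc : Continuous n)
    (T D rn : ℝ) (hD : 0 ≤ D) (hrn : 0 ≤ rn)
    (hζb : ∀ t : ℝ, T ≤ t → ‖ζp t‖ ≤ D)
    (hnb : ∀ t : ℝ, T ≤ t → |n t| ≤ rn)
    (hdyn : ∀ t : ℝ, HasDerivAt ϵ
      (Matrix.toEuclideanLin (Kmat k) (ϵ t) + Matrix.toEuclideanLin (Zmat k) (ζp t)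
        + n t • kappa k) t)
    (ν : ℝ) (hν : ν ∈ Set.Ioo (0 : ℝ) 1) :
    limsup (fun t : ℝ => ‖ϵ t‖) atTop ≤
      max k⁻¹ 1 *
        Real.sqrt ((⨆ i, hP.eigenvalues i) / (⨅ i, hP.eigenvalues i)) *
        (2 * (⨆ i, hP.eigenvalues i) / (ν * k)) *
        (‖LinearMap.toContinuousLinearMap (Matrix.toEuclideanLin (Zmat k))‖ * D
          + k ^ 2 * rn) :=
  control_error_ultimate_bound_general k hk hP ϵ ζp n T D rn hζb hnb hdyn ν hν
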